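/- arXiv:2207.03091 — 4 statements merged into one kernel-verified Lean document; each statement's English description precedes it below -/
import Mathlib

section
/- Let h: 2^V → ℝ be a monotone nondecreasing normalized set function with submodularity ratio γ and generalized curvature ζ > 0. If S_k is produced by the approximate greedy rule h(v_j | S_{j-1}) ≥ max_v h(v | S_{j-1}) − r_j with r_j ≥ 0, then h(S_k) ≥ (1/ζ)(1 − e^{−ζγ})·h(S*) − Σ_{j=1}^k r_j, where S* is an optimal set of cardinality at most k. -/
/-!
Write `g(A) = h(S* ∪ A) - h(A)` for the gap to the optimum and `d(A) = |S* \ A|`. By the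
submodularity ratio, a greedy step from `A` gains `ρ ≥ γ g(A) / d(A) - r`. If the step picks an
element outside `S*`, the curvature bound shows that the gap shrinks by at most `ζ ρ`; if it picks
an element of `S*`, the gap shrinks by `ρ`, but `d` drops by one. Induction on the number of
remaining steps then shows that `n` steps from `A` gain at least `c(n, d(A)) g(A) - ∑ r`, where
`c(s, d) = ζ⁻¹ (1 - (1 - ζγ/d)^min(s, d))`, and `c(k, d) ≥ ζ⁻¹ (1 - e^{-ζγ})` for `1 ≤ d ≤ k`.
-/

open Finset

/-- Marginal gain h(v | S) = h(S ∪ {v}) − h(S). -/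
def marg {V : Type*} [DecidableEq V] (h : Finset V → ℝ) (v : V) (S : Finset V) : ℝ :=
  h (insert v S) - h S

/-- Monotone nondecreasing set function. -/
def Monot {V : Type*} (f : Finset V → ℝ) : Prop := ∀ A B : Finset V, A ⊆ B → f A ≤ f B

/-- At `d = 0` the junk value `ζ * γ / 0 = 0` makes the coefficient vanish. Capping the exponent
at `d` is what makes the recursion `natCast_mul_greedyCoef_succ_le_pred` hold. -/
noncomputable def greedyCoef (γ ζ : ℝ) (s d : ℕ) : ℝ :=
  ζ⁻¹ * (1 - (1 - ζ * γ / d) ^ min s d)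

lemma greedyCoef_zero_left (γ ζ : ℝ) (d : ℕ) : greedyCoef γ ζ 0 d = 0 := by
  simp [greedyCoef]

lemma greedyCoef_zero_right (γ ζ : ℝ) (s : ℕ) : greedyCoef γ ζ s 0 = 0 := by
  simp [greedyCoef]

lemma one_sub_mul_greedyCoef {γ ζ : ℝ} (hζ : ζ ≠ 0) (s d : ℕ) :
    1 - ζ * greedyCoef γ ζ s d = (1 - ζ * γ / d) ^ min s d := by
  rw [greedyCoef, ← mul_assoc, mul_inv_cancel₀ hζ]
  ring

lemma one_sub_mul_le_pow {y : ℝ} (hy : y ≤ 2) (n : ℕ) : 1 - n * y ≤ (1 - y) ^ n := by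
  simpa [sub_eq_add_neg] using one_add_mul_le_pow (a := -y) (by linarith) n

lemma natCast_mul_div_le {x : ℝ} (hx : 0 ≤ x) {m d : ℕ} (hmd : m ≤ d) : m * (x / d) ≤ x := by
  rcases Nat.eq_zero_or_pos d with rfl | hd
  · simpa using hx
  · rw [mul_div_assoc', div_le_iff₀ (by positivity), mul_comm]
    exact mul_le_mul_of_nonneg_left (by exact_mod_cast hmd) hx

lemma div_natCast_le_self {x : ℝ} (hx : 0 ≤ x) (d : ℕ) : x / d ≤ x := by
  rcases Nat.eq_zero_or_pos d with rfl | hd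
  · simpa using hx
  · exact div_le_self hx (by exact_mod_cast hd)

lemma pow_one_sub_div_mem_Icc {x : ℝ} (hx0 : 0 ≤ x) (hx1 : x ≤ 1) (d m : ℕ) :
    0 ≤ (1 - x / d) ^ m ∧ (1 - x / d) ^ m ≤ 1 := by
  have hxd := div_natCast_le_self hx0 d
  have hxd0 : 0 ≤ x / d := by positivity
  exact ⟨pow_nonneg (by linarith) m, pow_le_one₀ (by linarith) (by linarith)⟩

section GreedyCoef

variable {γ ζ : ℝ}

lemma greedyCoef_nonneg (hγ0 : 0 ≤ γ) (hγ1 : γ ≤ 1) (hζ0 : 0 < ζ) (hζ1 : ζ ≤ 1) (s d : ℕ) :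
    0 ≤ greedyCoef γ ζ s d :=
  mul_nonneg (inv_nonneg.2 hζ0.le) <| sub_nonneg.2
    (pow_one_sub_div_mem_Icc (by positivity) (mul_le_one₀ hζ1 hγ0 hγ1) d _).2

lemma greedyCoef_le (hγ0 : 0 ≤ γ) (hγ1 : γ ≤ 1) (hζ0 : 0 < ζ) (hζ1 : ζ ≤ 1) (s d : ℕ) :
    greedyCoef γ ζ s d ≤ γ := by
  have hx : 0 ≤ ζ * γ := by positivity
  have hbern := one_sub_mul_le_pow (y := ζ * γ / d)
    (by linarith [div_natCast_le_self hx d, mul_le_one₀ hζ1 hγ0 hγ1]) (min s d)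
  have := natCast_mul_div_le hx (min_le_right s d)
  rw [greedyCoef, inv_mul_le_iff₀ hζ0]
  linarith

lemma natCast_mul_greedyCoef_succ_le (hγ0 : 0 ≤ γ) (hγ1 : γ ≤ 1) (hζ0 : 0 < ζ) (hζ1 : ζ ≤ 1)
    (n d : ℕ) :
    d * greedyCoef γ ζ (n + 1) d ≤ d * greedyCoef γ ζ n d + γ * (1 - ζ * greedyCoef γ ζ n d) := by
  rw [one_sub_mul_greedyCoef hζ0.ne']
  rcases le_or_gt d n with hdn | hnd
  · have hsucc : greedyCoef γ ζ (n + 1) d = greedyCoef γ ζ n d := by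
      rw [greedyCoef, greedyCoef, min_eq_right hdn, min_eq_right (by omega)]
    rw [hsucc]
    exact le_add_of_nonneg_right <| mul_nonneg hγ0
      (pow_one_sub_div_mem_Icc (by positivity) (mul_le_one₀ hζ1 hγ0 hγ1) d _).1
  · have hd : (d : ℝ) ≠ 0 := Nat.cast_ne_zero.2 (by omega)
    rw [min_eq_left hnd.le, greedyCoef, greedyCoef, min_eq_left hnd, min_eq_left hnd.le,
      pow_succ]
    generalize (1 - ζ * γ / d) ^ n = P
    apply le_of_eq
    field_simp
    ring

/-- Writing `F e` for the left side and `b = 1 - ζγ/D`, the induction step rests on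
`b F e - F (e + 1) = δ (F e - D (1 - ζ) γ)` with `δ = ζγ/(D-1) - ζγ/D ≥ 0`, and `F e ≥ D (1 - ζ) γ`
follows from Bernoulli's inequality `(1 - ζγ/(D-1))^e ≥ 1 - ζγ`. -/
lemma sub_mul_pow_add_le_mul_pow_succ (hγ0 : 0 ≤ γ) (hγ1 : γ ≤ 1) (hζ0 : 0 < ζ) (hζ1 : ζ ≤ 1)
    {D : ℝ} (hD : 1 ≤ D) :
    ∀ e : ℕ, (e : ℝ) + 1 ≤ D →
      (D - γ) * (1 - ζ * γ / (D - 1)) ^ e + (1 - ζ) * γ ≤ D * (1 - ζ * γ / D) ^ (e + 1) := by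
  have hx0 : 0 ≤ ζ * γ := by positivity
  have hx1 : ζ * γ ≤ 1 := mul_le_one₀ hζ1 hγ0 hγ1
  set c := 1 - ζ * γ / (D - 1)
  set b := 1 - ζ * γ / D
  intro e
  induction e with
  | zero =>
    intro _
    have hD0 : D ≠ 0 := by positivity
    simp only [b, pow_zero, zero_add, pow_one]
    apply le_of_eq
    field_simp
    ring
  | succ e ih =>
    intro he
    push_cast at he
    have hD1 : 0 < D - 1 := by linarith
    have hlow : D * ((1 - ζ) * γ) ≤ (D - γ) * c ^ e + (1 - ζ) * γ := by
      have hbern := one_sub_mul_le_pow (y := ζ * γ / (D - 1))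
        (by rw [div_le_iff₀ hD1]; nlinarith) e
      have he' : (e : ℝ) * (ζ * γ / (D - 1)) ≤ ζ * γ := by
        rw [mul_div_assoc', div_le_iff₀ hD1]; nlinarith
      nlinarith
    have hb : 0 ≤ b := by
      simp only [b]; rw [sub_nonneg, div_le_iff₀ (by linarith)]; linarith
    have hδ : 0 ≤ ζ * γ / (D - 1) - ζ * γ / D := by
      rw [sub_nonneg]; exact div_le_div_of_nonneg_left hx0 hD1 (by linarith)
    have hkey : b * ((D - γ) * c ^ e + (1 - ζ) * γ) - ((D - γ) * c ^ (e + 1) + (1 - ζ) * γ)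
        = (ζ * γ / (D - 1) - ζ * γ / D)
          * ((D - γ) * c ^ e + (1 - ζ) * γ - D * ((1 - ζ) * γ)) := by
      simp only [b, c, pow_succ]
      field_simp
      ring
    have hstep := mul_le_mul_of_nonneg_left (ih (by linarith)) hb
    have hpow : b * (D * b ^ (e + 1)) = D * b ^ (e + 1 + 1) := by ring
    nlinarith [mul_nonneg hδ (sub_nonneg.2 hlow)]

lemma natCast_mul_greedyCoef_succ_le_pred (hγ0 : 0 ≤ γ) (hγ1 : γ ≤ 1) (hζ0 : 0 < ζ)
    (hζ1 : ζ ≤ 1) {d : ℕ} (hd : 1 ≤ d) (n : ℕ) :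
    d * greedyCoef γ ζ (n + 1) d
      ≤ d * greedyCoef γ ζ n (d - 1) + γ * (1 - greedyCoef γ ζ n (d - 1)) := by
  have hcast : ((d - 1 : ℕ) : ℝ) = d - 1 := by push_cast [Nat.cast_sub hd]; ring
  have hmin : min (n + 1) d = min n (d - 1) + 1 := by omega
  have hstar := sub_mul_pow_add_le_mul_pow_succ hγ0 hγ1 hζ0 hζ1 (D := d) (by exact_mod_cast hd)
    (min n (d - 1)) (by exact_mod_cast (by omega : min n (d - 1) + 1 ≤ d))
  rw [greedyCoef, greedyCoef, hcast, hmin]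
  generalize (1 - ζ * γ / d) ^ (min n (d - 1) + 1) = R₁ at hstar ⊢
  generalize (1 - ζ * γ / (d - 1)) ^ min n (d - 1) = R at hstar ⊢
  rw [← sub_nonneg]
  have hζ : ζ ≠ 0 := hζ0.ne'
  calc 0 ≤ ζ⁻¹ * (d * R₁ - ((d - γ) * R + (1 - ζ) * γ)) :=
        mul_nonneg (inv_nonneg.2 hζ0.le) (sub_nonneg.2 hstar)
    _ = _ := by field_simp; ring

lemma inv_mul_one_sub_exp_le_greedyCoef (hγ0 : 0 ≤ γ) (hγ1 : γ ≤ 1) (hζ0 : 0 < ζ)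
    (hζ1 : ζ ≤ 1) {d k : ℕ} (hd : 1 ≤ d) (hdk : d ≤ k) :
    ζ⁻¹ * (1 - Real.exp (-(ζ * γ))) ≤ greedyCoef γ ζ k d := by
  rw [greedyCoef, min_eq_right hdk]
  have hx : ζ * γ ≤ d := (mul_le_one₀ hζ1 hγ0 hγ1).trans (by exact_mod_cast hd)
  have := Real.one_sub_div_pow_le_exp_neg hx
  exact mul_le_mul_of_nonneg_left (by linarith) (inv_nonneg.2 hζ0.le)

lemma mul_le_of_natCast_mul_le {T₁ T β g ρ r : ℝ} {d : ℕ} (hd : 0 < d) (hg : 0 ≤ g)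
    (hβ0 : 0 ≤ β) (hβ1 : β ≤ 1) (hr : 0 ≤ r) (hT : d * T₁ ≤ d * T + γ * β)
    (hratio : γ * g ≤ d * (ρ + r)) :
    T₁ * g ≤ β * ρ + T * g + r := by
  have hD : (0 : ℝ) < d := by exact_mod_cast hd
  refine le_of_mul_le_mul_left ?_ hD
  calc d * (T₁ * g) ≤ (d * T + γ * β) * g := by
        rw [← mul_assoc]; exact mul_le_mul_of_nonneg_right hT hg
    _ = d * (T * g) + β * (γ * g) := by ring
    _ ≤ d * (T * g) + β * (d * (ρ + r)) := by gcongr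
    _ ≤ d * (β * ρ + T * g + r) := by
        nlinarith [mul_nonneg hD.le (mul_nonneg hr (sub_nonneg.2 hβ1))]

lemma greedyCoef_succ_mul_le (hγ0 : 0 ≤ γ) (hγ1 : γ ≤ 1) (hζ0 : 0 < ζ) (hζ1 : ζ ≤ 1)
    {n d : ℕ} {g ρ r : ℝ} (hg : 0 ≤ g) (hρ : 0 ≤ ρ) (hr : 0 ≤ r)
    (hratio : γ * g ≤ d * (ρ + r)) :
    greedyCoef γ ζ (n + 1) d * g
      ≤ (1 - ζ * greedyCoef γ ζ n d) * ρ + greedyCoef γ ζ n d * g + r := by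
  rcases Nat.eq_zero_or_pos d with rfl | hd
  · simp only [greedyCoef_zero_right]
    linarith
  have hT0 := greedyCoef_nonneg hγ0 hγ1 hζ0 hζ1 n d
  have hTγ := greedyCoef_le hγ0 hγ1 hζ0 hζ1 n d
  exact mul_le_of_natCast_mul_le hd hg (by nlinarith) (by nlinarith) hr
    (natCast_mul_greedyCoef_succ_le hγ0 hγ1 hζ0 hζ1 n d) hratio

lemma greedyCoef_succ_mul_le_pred (hγ0 : 0 ≤ γ) (hγ1 : γ ≤ 1) (hζ0 : 0 < ζ) (hζ1 : ζ ≤ 1)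
    {n d : ℕ} (hd : 1 ≤ d) {g ρ r : ℝ} (hg : 0 ≤ g) (hr : 0 ≤ r)
    (hratio : γ * g ≤ d * (ρ + r)) :
    greedyCoef γ ζ (n + 1) d * g
      ≤ (1 - greedyCoef γ ζ n (d - 1)) * ρ + greedyCoef γ ζ n (d - 1) * g + r :=
  mul_le_of_natCast_mul_le hd hg
    (by linarith [greedyCoef_le hγ0 hγ1 hζ0 hζ1 n (d - 1)])
    (by linarith [greedyCoef_nonneg hγ0 hγ1 hζ0 hζ1 n (d - 1)]) hr
    (natCast_mul_greedyCoef_succ_le_pred hγ0 hγ1 hζ0 hζ1 hd n) hratio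

end GreedyCoef

lemma Monot.sub_nonneg_of_subset {V : Type*} {h : Finset V → ℝ} (hm : Monot h) {A B : Finset V}
    (hAB : A ⊆ B) : 0 ≤ h B - h A :=
  sub_nonneg.2 (hm A B hAB)

def IsSubmodularityRatio {V : Type*} [DecidableEq V] (h : Finset V → ℝ) (γ : ℝ) : Prop :=
  ∀ A B : Finset V, (∑ v ∈ B \ A, marg h v A) ≥ γ * (h (B ∪ A) - h A)

def IsGeneralizedCurvature {V : Type*} [DecidableEq V] (h : Finset V → ℝ) (ζ : ℝ) : Prop :=
  ∀ (A B : Finset V) (v : V), v ∈ A → v ∉ B →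
    marg h v ((A.erase v) ∪ B) ≥ (1 - ζ) * marg h v (A.erase v)

section SetFunction

variable {V : Type*} [DecidableEq V] {h : Finset V → ℝ}

lemma IsSubmodularityRatio.mul_sub_le {γ : ℝ} (hγ : IsSubmodularityRatio h γ) {m : ℝ}
    (O A : Finset V) (hle : ∀ w, marg h w A ≤ m) :
    γ * (h (O ∪ A) - h A) ≤ #(O \ A) * m :=
  calc γ * (h (O ∪ A) - h A) ≤ ∑ w ∈ O \ A, marg h w A := hγ A O
    _ ≤ #(O \ A) • m := sum_le_card_nsmul _ _ _ fun w _ => hle w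
    _ = #(O \ A) * m := nsmul_eq_mul _ _

lemma IsGeneralizedCurvature.sub_sub_le {ζ : ℝ} (hζ : IsGeneralizedCurvature h ζ)
    {O A : Finset V} {v : V} (hv : v ∉ O \ A) :
    h (O ∪ A) - h A - ζ * marg h v A ≤ h (O ∪ insert v A) - h (insert v A) := by
  by_cases hvA : v ∈ A
  · simp [marg, insert_eq_of_mem hvA]
  have hvO : v ∉ O := fun hvO => hv (mem_sdiff.2 ⟨hvO, hvA⟩)
  have hcurv := hζ (insert v A) O v (mem_insert_self v A) hvO
  rw [erase_insert hvA, marg, marg, ← insert_union, union_comm (insert v A)] at hcurv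
  rw [union_comm O A]
  unfold marg
  linarith

lemma greedyCoef_succ_mul_le_of_greedy_step (hm : Monot h) {γ ζ : ℝ}
    (hγ : IsSubmodularityRatio h γ) (hζ : IsGeneralizedCurvature h ζ)
    (hγ0 : 0 ≤ γ) (hγ1 : γ ≤ 1) (hζ0 : 0 < ζ) (hζ1 : ζ ≤ 1)
    (O A : Finset V) (v : V) {r : ℝ} (hgreedy : ∀ w, marg h v A ≥ marg h w A - r) (n : ℕ) :
    greedyCoef γ ζ (n + 1) #(O \ A) * (h (O ∪ A) - h A)
      ≤ marg h v A
        + greedyCoef γ ζ n #(O \ insert v A) * (h (O ∪ insert v A) - h (insert v A)) + r := by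
  have hr : 0 ≤ r := by linarith [hgreedy v]
  have hgap := hm.sub_nonneg_of_subset (subset_union_right (s₁ := O) (s₂ := A))
  have hratio := hγ.mul_sub_le O A (m := marg h v A + r) fun w => by linarith [hgreedy w]
  by_cases hv : v ∈ O \ A
  · have hcard : #(O \ insert v A) = #(O \ A) - 1 := by
      rw [sdiff_insert, card_erase_of_mem hv]
    have hunion : O ∪ insert v A = O ∪ A := by
      rw [union_insert, insert_eq_of_mem (mem_union_left A (mem_sdiff.1 hv).1)]
    rw [hcard, hunion]
    calc _ ≤ _ :=
          greedyCoef_succ_mul_le_pred hγ0 hγ1 hζ0 hζ1 (card_pos.2 ⟨v, hv⟩) hgap hr hratio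
      _ = _ := by unfold marg; ring
  · rw [sdiff_insert, erase_eq_of_notMem hv]
    have hcurv := mul_le_mul_of_nonneg_left (hζ.sub_sub_le hv)
      (greedyCoef_nonneg hγ0 hγ1 hζ0 hζ1 n #(O \ A))
    have hstep := greedyCoef_succ_mul_le hγ0 hγ1 hζ0 hζ1 (n := n) hgap
      (hm.sub_nonneg_of_subset (subset_insert v A)) hr hratio
    unfold marg at hcurv ⊢
    linarith

theorem greedyCoef_mul_le_of_greedy_run (hm : Monot h) {γ ζ : ℝ}
    (hγ : IsSubmodularityRatio h γ) (hζ : IsGeneralizedCurvature h ζ)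
    (hγ0 : 0 ≤ γ) (hγ1 : γ ≤ 1) (hζ0 : 0 < ζ) (hζ1 : ζ ≤ 1) (O : Finset V) (n : ℕ) :
    ∀ (v : ℕ → V) (S : ℕ → Finset V) (r : ℕ → ℝ),
      (∀ j < n, S (j + 1) = insert (v j) (S j)) →
      (∀ j < n, ∀ w : V, marg h (v j) (S j) ≥ marg h w (S j) - r j) →
      greedyCoef γ ζ n #(O \ S 0) * (h (O ∪ S 0) - h (S 0))
        ≤ h (S n) - h (S 0) + ∑ j ∈ range n, r j := by
  induction n with
  | zero => simp [greedyCoef_zero_left]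
  | succ n ih =>
    intro v S r hS hgreedy
    have hrest := ih (fun j => v (j + 1)) (fun j => S (j + 1)) (fun j => r (j + 1))
      (fun j hj => hS (j + 1) (by omega)) (fun j hj => hgreedy (j + 1) (by omega))
    have hfirst := greedyCoef_succ_mul_le_of_greedy_step hm hγ hζ hγ0 hγ1 hζ0 hζ1 O (S 0) (v 0)
      (hgreedy 0 (by omega)) n
    unfold marg at hfirst
    rw [← hS 0 (by omega)] at hfirst
    rw [sum_range_succ']
    linarith

end SetFunction

theorem stmt_1_general {V : Type*} [DecidableEq V]
    (h : Finset V → ℝ) (γ ζ : ℝ) (k : ℕ)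
    (hm : Monot h) (h0 : h ∅ = 0)
    -- γ is a valid submodularity ratio for h
    (hγ : ∀ A B : Finset V, (∑ v ∈ B \ A, marg h v A) ≥ γ * (h (B ∪ A) - h A))
    (hγ0 : 0 ≤ γ) (hγ1 : γ ≤ 1)
    -- ζ is a valid generalized curvature for h
    (hζ : ∀ (A B : Finset V) (v : V), v ∈ A → v ∉ B →
      marg h v ((A.erase v) ∪ B) ≥ (1 - ζ) * marg h v (A.erase v))
    (hζ0 : 0 < ζ) (hζ1 : ζ ≤ 1)
    (v : ℕ → V) (S : ℕ → Finset V) (r : ℕ → ℝ)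
    (hS0 : S 0 = ∅)
    (hSsucc : ∀ j < k, S (j + 1) = insert (v j) (S j))
    (hgreedy : ∀ j < k, ∀ w : V, marg h (v j) (S j) ≥ marg h w (S j) - r j)
    (Sstar : Finset V)
    (hcard : Sstar.card ≤ k) :
    h (S k) ≥ (1 / ζ) * (1 - Real.exp (-(ζ * γ))) * h Sstar
      - ∑ j ∈ Finset.range k, r j := by
  have hrun :=
    greedyCoef_mul_le_of_greedy_run hm hγ hζ hγ0 hγ1 hζ0 hζ1 Sstar k v S r hSsucc hgreedy
  rw [hS0, sdiff_empty, union_empty, h0, sub_zero, sub_zero] at hrun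
  rcases Sstar.eq_empty_or_nonempty with rfl | hne
  · rw [h0] at hrun ⊢
    linarith
  have hcoef := inv_mul_one_sub_exp_le_greedyCoef hγ0 hγ1 hζ0 hζ1 (card_pos.2 hne) hcard
  have hSstar := mul_le_mul_of_nonneg_right hcoef (hm.sub_nonneg_of_subset (empty_subset Sstar))
  rw [h0, sub_zero] at hSstar
  rw [one_div]
  linarith

theorem stmt_1 {V : Type*} [Fintype V] [DecidableEq V]
    (h : Finset V → ℝ) (γ ζ : ℝ) (k : ℕ)
    (hm : Monot h) (h0 : h ∅ = 0)
    -- γ is a valid submodularity ratio for h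
    (hγ : ∀ A B : Finset V, (∑ v ∈ B \ A, marg h v A) ≥ γ * (h (B ∪ A) - h A))
    (hγ0 : 0 ≤ γ) (hγ1 : γ ≤ 1)
    -- ζ is a valid generalized curvature for h
    (hζ : ∀ (A B : Finset V) (v : V), v ∈ A → v ∉ B →
      marg h v ((A.erase v) ∪ B) ≥ (1 - ζ) * marg h v (A.erase v))
    (hζ0 : 0 < ζ) (hζ1 : ζ ≤ 1)
    (v : ℕ → V) (S : ℕ → Finset V) (r : ℕ → ℝ)
    (hS0 : S 0 = ∅)
    (hSsucc : ∀ j < k, S (j + 1) = insert (v j) (S j))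
    (hr : ∀ j, 0 ≤ r j)
    (hgreedy : ∀ j < k, ∀ w : V, marg h (v j) (S j) ≥ marg h w (S j) - r j)
    (Sstar : Finset V)
    (hcard : Sstar.card ≤ k)
    (hopt : ∀ T : Finset V, T.card ≤ k → h T ≤ h Sstar) :
    h (S k) ≥ (1 / ζ) * (1 - Real.exp (-(ζ * γ))) * h Sstar
      - ∑ j ∈ Finset.range k, r j :=
  stmt_1_general h γ ζ k hm h0 hγ hγ0 hγ1 hζ hζ0 hζ1 v S r hS0 hSsucc hgreedy Sstar hcard
end

section
/- Let h: 2^V → ℝ be monotone nondecreasing, normalized, with submodularity ratio γ > 0 and generalized curvature ζ. Let S_t = {s_1,…,s_t} be any ordered chain of selections and S* an optimal set of size k. Then for every t ∈ {0,…,k−1}: h(S*) ≤ ζ·Σ_{j: s_j ∈ S_t∖S*} a_j + Σ_{j: s_j ∈ S_t∩S*} a_j + (1/γ)·(k − |S_t ∩ S*|)·(a_{t+1} + r_{t+1}), where a_j = h(s_j | S_{j-1}) and r_{t+1} = max_v h(v|S_t) − h(s_{t+1}|S_t) ≥ 0. -/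
open Finset

theorem stmt_9 {V : Type*} [Fintype V] [DecidableEq V] [Nonempty V]
    (h : Finset V → ℝ) (γ ζ : ℝ) (k : ℕ)
    (hm : Monot h) (h0 : h ∅ = 0)
    (hγpos : 0 < γ)
    (hγ : ∀ A B : Finset V, (∑ v ∈ B \ A, marg h v A) ≥ γ * (h (B ∪ A) - h A))
    (hζ : ∀ (A B : Finset V) (v : V), v ∈ A → v ∉ B →
      marg h v ((A.erase v) ∪ B) ≥ (1 - ζ) * marg h v (A.erase v))
    (s : ℕ → V) (S : ℕ → Finset V) (a r : ℕ → ℝ)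
    (hS0 : S 0 = ∅)
    (hSsucc : ∀ j, S (j + 1) = insert (s (j + 1)) (S j))
    (hnew : ∀ j, s (j + 1) ∉ S j)
    (ha : ∀ j, a (j + 1) = marg h (s (j + 1)) (S j))
    (hr : ∀ t, r (t + 1) =
      Finset.univ.sup' Finset.univ_nonempty (fun w : V => marg h w (S t)) - a (t + 1))
    (Sstar : Finset V)
    (hcard : Sstar.card = k)
    (hopt : ∀ T : Finset V, T.card ≤ k → h T ≤ h Sstar) :
    ∀ t < k,
      h Sstar ≤
        ζ * (∑ j ∈ (Finset.range t).filter (fun j => s (j + 1) ∉ Sstar), a (j + 1))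
        + (∑ j ∈ (Finset.range t).filter (fun j => s (j + 1) ∈ Sstar), a (j + 1))
        + (1 / γ) * ((k : ℝ) - ((S t ∩ Sstar).card : ℝ)) * (a (t + 1) + r (t + 1)) := by

  intro t ht
  -- telescoping of h (S t)
  have htel : ∀ u, h (S u) = ∑ j ∈ Finset.range u, a (j + 1) := by
    intro u
    induction u with
    | zero => simp [hS0, h0]
    | succ n ih =>
      rw [Finset.sum_range_succ, ← ih, ha n, marg, hSsucc n]
      ring
  -- telescoping of h (Sstar ∪ S t)
  have htel2 : ∀ u, h (Sstar ∪ S u)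
      = h Sstar + ∑ j ∈ Finset.range u, marg h (s (j + 1)) (Sstar ∪ S j) := by
    intro u
    induction u with
    | zero => simp [hS0]
    | succ n ih =>
      rw [Finset.sum_range_succ, hSsucc n, Finset.union_insert, marg]
      linarith [ih]
  -- lower bound each telescoping term
  have hterm : ∀ j ∈ Finset.range t,
      (if s (j + 1) ∈ Sstar then (0 : ℝ) else (1 - ζ) * a (j + 1))
        ≤ marg h (s (j + 1)) (Sstar ∪ S j) := by
    intro j _
    by_cases hj : s (j + 1) ∈ Sstar
    · simp [hj, marg, Finset.insert_eq_self.mpr (Finset.mem_union_left _ hj)]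
    · have hmem : s (j + 1) ∈ S (j + 1) := by rw [hSsucc]; exact Finset.mem_insert_self _ _
      have herase : (S (j + 1)).erase (s (j + 1)) = S j := by
        rw [hSsucc]; exact Finset.erase_insert (hnew j)
      have := hζ (S (j + 1)) Sstar (s (j + 1)) hmem hj
      rw [herase, Finset.union_comm] at this
      simpa [hj, ha j] using this
  have hsum1 : (1 - ζ) * ∑ j ∈ (Finset.range t).filter (fun j => s (j + 1) ∉ Sstar), a (j + 1)
      ≤ ∑ j ∈ Finset.range t, marg h (s (j + 1)) (Sstar ∪ S j) := by
    have := Finset.sum_le_sum hterm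
    rw [Finset.sum_ite, Finset.sum_const_zero, zero_add, ← Finset.mul_sum] at this
    exact this
  -- bound h (Sstar ∪ S t) via submodularity ratio
  set M : ℝ := Finset.univ.sup' Finset.univ_nonempty (fun w : V => marg h w (S t)) with hM
  have hMar : a (t + 1) + r (t + 1) = M := by rw [hr t]; ring
  have hcard2 : ((Sstar \ S t).card : ℝ) = (k : ℝ) - ((S t ∩ Sstar).card : ℝ) := by
    have h1 : (Sstar ∩ S t).card + (Sstar \ S t).card = Sstar.card :=
      Finset.card_inter_add_card_sdiff Sstar (S t)
    rw [Finset.inter_comm]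
    have := congrArg (Nat.cast (R := ℝ)) h1
    push_cast at this
    rw [hcard] at h1
    push_cast [← h1]
    ring
  have hsum2 : ∑ v ∈ Sstar \ S t, marg h v (S t) ≤ ((Sstar \ S t).card : ℝ) * M := by
    have := Finset.sum_le_card_nsmul (Sstar \ S t) (fun v => marg h v (S t)) M
      (fun v _ => Finset.le_sup' (fun w : V => marg h w (S t)) (Finset.mem_univ v))
    simpa [nsmul_eq_mul] using this
  have hB : h (Sstar ∪ S t) - h (S t) ≤ (1 / γ) * (((Sstar \ S t).card : ℝ) * M) := by
    have hg := hγ (S t) Sstar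
    rw [ge_iff_le, ← le_div_iff₀' hγpos] at hg
    calc h (Sstar ∪ S t) - h (S t) ≤ (∑ v ∈ Sstar \ S t, marg h v (S t)) / γ := hg
      _ ≤ (((Sstar \ S t).card : ℝ) * M) / γ := by
          gcongr
      _ = (1 / γ) * (((Sstar \ S t).card : ℝ) * M) := by ring
  -- combine
  have hsplit : (∑ j ∈ (Finset.range t).filter (fun j => s (j + 1) ∈ Sstar), a (j + 1))
      + (∑ j ∈ (Finset.range t).filter (fun j => s (j + 1) ∉ Sstar), a (j + 1))
      = ∑ j ∈ Finset.range t, a (j + 1) :=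
    Finset.sum_filter_add_sum_filter_not _ _ _
  have h2 := htel2 t
  have h1 := htel t
  rw [hMar, ← hcard2]
  nlinarith [hsum1, hB, hsplit]
end

section
/- For all κ_f ∈ (0,1] and κ^g ∈ [0,1]: min{1 − κ_f/e, 1 − κ^g} ≥ (1/κ_f)·(1 − e^{−(1−κ^g)·κ_f}). That is, the distorted-greedy approximation ratio for BP maximization dominates the vanilla greedy approximation ratio of Bai–Bilmes. -/
/-!
The bound by `1 - κ^g` is `1 - e^{-y} ≤ y`. For the bound by `1 - κ_f/e`, `κ^g ≥ 0` reduces it to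
`e^{-x} ≥ 1 - x + x²/e` on `[0, 1]`. The function `e^x (1 - x + x²/e)` has derivative
`e^x x (x + 2 - e) / e`, so it decreases on `[0, e - 2]` and increases on `[e - 2, 1]`; as it equals
`1` at both ends, it is at most `1` on `[0, 1]`.
-/

open Real Set

lemma hasDerivAt_exp_mul_one_sub_add_sq_div_exp_one (x : ℝ) :
    HasDerivAt (fun y ↦ exp y * (1 - y + y ^ 2 / exp 1))
      (exp x * x * (x + 2 - exp 1) / exp 1) x := by
  refine ((hasDerivAt_exp x).mul
    (((hasDerivAt_id' x).const_sub 1).fun_add ((hasDerivAt_pow 2 x).div_const _))).congr_deriv ?_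
  field_simp
  ring

lemma exp_mul_one_sub_add_sq_div_exp_one_le_one {x : ℝ} (hx0 : 0 ≤ x) (hx1 : x ≤ 1) :
    exp x * (1 - x + x ^ 2 / exp 1) ≤ 1 := by
  set f : ℝ → ℝ := fun y ↦ exp y * (1 - y + y ^ 2 / exp 1)
  have hderiv := hasDerivAt_exp_mul_one_sub_add_sq_div_exp_one
  have hcont : Continuous f := by fun_prop
  have he_lo := exp_one_gt_d9
  have he_hi := exp_one_lt_d9
  rcases le_total x (exp 1 - 2) with hx | hx
  · have hanti : AntitoneOn f (Icc 0 (exp 1 - 2)) := by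
      refine antitoneOn_of_hasDerivWithinAt_nonpos (convex_Icc _ _) hcont.continuousOn
        (fun y _ ↦ (hderiv y).hasDerivWithinAt) fun y hy ↦ ?_
      rw [interior_Icc] at hy
      have : exp y * y * (y + 2 - exp 1) ≤ 0 :=
        mul_nonpos_of_nonneg_of_nonpos (mul_nonneg (exp_pos y).le hy.1.le) (by linarith [hy.2])
      exact div_nonpos_of_nonpos_of_nonneg this (exp_pos 1).le
    simpa [f] using hanti ⟨le_rfl, by linarith⟩ ⟨hx0, hx⟩ hx0
  · have hmono : MonotoneOn f (Icc (exp 1 - 2) 1) := by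
      refine monotoneOn_of_hasDerivWithinAt_nonneg (convex_Icc _ _) hcont.continuousOn
        (fun y _ ↦ (hderiv y).hasDerivWithinAt) fun y hy ↦ ?_
      rw [interior_Icc] at hy
      have : 0 ≤ exp y * y * (y + 2 - exp 1) :=
        mul_nonneg (mul_nonneg (exp_pos y).le (by linarith [hy.1])) (by linarith [hy.1])
      positivity
    have := hmono ⟨hx, hx1⟩ ⟨by linarith, le_rfl⟩ hx1
    simpa [f, (exp_pos 1).ne'] using this

lemma one_sub_add_sq_div_exp_one_le_exp_neg {x : ℝ} (hx0 : 0 ≤ x) (hx1 : x ≤ 1) :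
    1 - x + x ^ 2 / exp 1 ≤ exp (-x) := by
  rw [exp_neg, ← one_div, le_div_iff₀ (exp_pos x), mul_comm]
  exact exp_mul_one_sub_add_sq_div_exp_one_le_one hx0 hx1

theorem stmt_15_general (κf κg : ℝ) (hκf0 : 0 < κf) (hκf1 : κf ≤ 1)
    (hκg0 : 0 ≤ κg) :
    min (1 - κf / Real.exp 1) (1 - κg)
      ≥ (1 / κf) * (1 - Real.exp (-(1 - κg) * κf)) := by
  rw [ge_iff_le, le_min_iff, one_div, inv_mul_le_iff₀ hκf0, inv_mul_le_iff₀ hκf0, neg_mul]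
  constructor
  · calc 1 - exp (-((1 - κg) * κf)) ≤ 1 - exp (-κf) := by
          gcongr
          linarith [mul_nonneg hκg0 hκf0.le]
      _ ≤ κf - κf ^ 2 / exp 1 := by
          linarith [one_sub_add_sq_div_exp_one_le_exp_neg hκf0.le hκf1]
      _ = κf * (1 - κf / exp 1) := by ring
  · linarith [one_sub_le_exp_neg ((1 - κg) * κf)]

theorem stmt_15 (κf κg : ℝ) (hκf0 : 0 < κf) (hκf1 : κf ≤ 1)
    (hκg0 : 0 ≤ κg) (hκg1 : κg ≤ 1) :
    min (1 - κf / Real.exp 1) (1 - κg)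
      ≥ (1 / κf) * (1 - Real.exp (-(1 - κg) * κf)) :=
  stmt_15_general κf κg hκf0 hκf1 hκg0
end

section
/- Let h = f + g with f monotone nondecreasing normalized submodular and g monotone nondecreasing normalized supermodular with curvature κ^g < 1. Let S* be optimal for max{h(S): |S| ≤ k} and let S_t be the greedy chain. Then for every t < k: h(S*) ≤ h(S_t) + (k/(1−κ^g))·(h(S_{t+1}) − h(S_t)). -/
open Finset

def Submod {V : Type*} [DecidableEq V] (f : Finset V → ℝ) : Prop :=
  ∀ A B : Finset V, ∀ v : V, A ⊆ B → v ∉ B → marg f v B ≤ marg f v A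

def Supmod {V : Type*} [DecidableEq V] (g : Finset V → ℝ) : Prop :=
  ∀ A B : Finset V, ∀ v : V, A ⊆ B → v ∉ B → marg g v A ≤ marg g v B

lemma telescope_bound {V : Type*} [DecidableEq V] (h : Finset V → ℝ) (c : ℝ)
    (hBP : ∀ (w : V) (A B : Finset V), A ⊆ B → marg h w B ≤ c * marg h w A)
    (A : Finset V) :
    ∀ T : Finset V, h (A ∪ T) ≤ h A + ∑ w ∈ T, c * marg h w A := by
  intro T
  induction T using Finset.induction_on with
  | empty => simp
  | @insert x T hx ih =>
    have h1 : h (A ∪ insert x T) = h (insert x (A ∪ T)) := by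
      rw [Finset.union_insert]
    have h2 : h (insert x (A ∪ T)) - h (A ∪ T) = marg h x (A ∪ T) := rfl
    have h3 : marg h x (A ∪ T) ≤ c * marg h x A :=
      hBP x A (A ∪ T) Finset.subset_union_left
    rw [Finset.sum_insert hx]
    have := ih
    linarith [h1 ▸ (by linarith : h (insert x (A ∪ T)) ≤ h (A ∪ T) + c * marg h x A)]

theorem stmt_17 {V : Type*} [Fintype V] [DecidableEq V]
    (f g : Finset V → ℝ) (κg : ℝ) (k : ℕ) (hk : 0 < k)
    (hf0 : f ∅ = 0) (hg0 : g ∅ = 0)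
    (hfm : Monot f) (hgm : Monot g)
    (hfs : Submod f) (hgs : Supmod g)
    (hκg0 : 0 ≤ κg) (hκg1 : κg < 1)
    (h : Finset V → ℝ) (hh : ∀ S, h S = f S + g S)
    -- BP bound h(v | B) ≤ (1/(1−κ^g))·h(v | A) for A ⊆ B (Lemma C.1 of Bai–Bilmes)
    (hBP : ∀ (w : V) (A B : Finset V), A ⊆ B →
      marg h w B ≤ (1 / (1 - κg)) * marg h w A)
    (v : ℕ → V) (S : ℕ → Finset V)
    (hS0 : S 0 = ∅)
    (hSsucc : ∀ t < k, S (t + 1) = insert (v t) (S t))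
    (hgreedy : ∀ t < k, ∀ w : V, marg h w (S t) ≤ marg h (v t) (S t))
    (Sstar : Finset V)
    (hcard : Sstar.card ≤ k)
    (hopt : ∀ T : Finset V, T.card ≤ k → h T ≤ h Sstar) :
    ∀ t < k, h Sstar ≤ h (S t) + ((k : ℝ) / (1 - κg)) * (h (S (t + 1)) - h (S t)) := by
  intro t ht
  have hκpos : 0 < 1 - κg := by linarith
  have c := (1 : ℝ) / (1 - κg)
  have hhm : Monot h := by
    intro A B hAB
    rw [hh, hh]
    exact add_le_add (hfm A B hAB) (hgm A B hAB)
  -- h(S*) ≤ h(S_t ∪ S*)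
  have step1 : h Sstar ≤ h (S t ∪ Sstar) := hhm _ _ Finset.subset_union_right
  have step2 : h (S t ∪ Sstar) ≤ h (S t) + ∑ w ∈ Sstar, (1 / (1 - κg)) * marg h w (S t) :=
    telescope_bound h _ hBP (S t) Sstar
  set M := marg h (v t) (S t) with hM
  have hMnonneg : 0 ≤ M := by
    have := hhm (S t) (insert (v t) (S t)) (Finset.subset_insert _ _)
    simpa [hM, marg] using this
  have hcpos : 0 ≤ 1 / (1 - κg) := by positivity
  have step3 : ∑ w ∈ Sstar, (1 / (1 - κg)) * marg h w (S t)
      ≤ (Sstar.card : ℝ) * ((1 / (1 - κg)) * M) := by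
    calc ∑ w ∈ Sstar, (1 / (1 - κg)) * marg h w (S t)
        ≤ Sstar.card • ((1 / (1 - κg)) * M) :=
          Finset.sum_le_card_nsmul _ _ _
            (fun w _ => mul_le_mul_of_nonneg_left (hgreedy t ht w) hcpos)
      _ = (Sstar.card : ℝ) * ((1 / (1 - κg)) * M) := by simp [nsmul_eq_mul]
  have step4 : (Sstar.card : ℝ) * ((1 / (1 - κg)) * M) ≤ (k : ℝ) * ((1 / (1 - κg)) * M) := by
    apply mul_le_mul_of_nonneg_right _ (by positivity)
    exact_mod_cast hcard
  have hMeq : h (S (t + 1)) - h (S t) = M := by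
    rw [hSsucc t ht]; rfl
  rw [hMeq]
  have : (k : ℝ) / (1 - κg) * M = (k : ℝ) * ((1 / (1 - κg)) * M) := by ring
  rw [this]
  linarith
end
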